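/- Let x, y ∈ (1/2, e/(1+e)) be distinct reals with ln(x/(1-x)) - ln(y/(1-y)) irrational, and let f be the homeomorphism of the closed unit disk defined in the construction. Then {x, y} is a Li-Yorke chaotic pair for f: liminf_{n→∞} |fⁿ(x) - fⁿ(y)| = 0 and limsup_{n→∞} |fⁿ(x) - fⁿ(y)| > 0 (in fact ≥ 2 along a subsequence of times 2^{n_k}-1). -/

import Mathlib

/-- The function ξ from the paper. -/
noncomputable def xi (r : ℝ) : ℝ :=
  if r ≤ 1 then 0
  else
    if Even ⌊Real.log r⌋ then
      (Real.log r - (⌊Real.log r⌋ : ℝ)) /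
        (2 : ℝ) ^ (⌊Real.logb 2 (((⌊Real.log r / 2⌋ + 1 : ℤ) : ℝ))⌋)
    else
      (1 - (Real.log r - (⌊Real.log r⌋ : ℝ))) /
        (2 : ℝ) ^ (⌊Real.logb 2 (((⌊Real.log r / 2⌋ + 1 : ℤ) : ℝ))⌋)

/-- The map f from the paper, as a map of ℂ (it preserves the closed unit disk). -/
noncomputable def fMap (z : ℂ) : ℂ :=
  if ‖z‖ = 0 ∨ ‖z‖ = 1 then z
  else (Real.exp 2 : ℂ) * z / ((Real.exp 2 * ‖z‖ - ‖z‖ + 1 : ℝ) : ℂ) *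
    Complex.exp (2 * Real.pi * Complex.I * xi (‖z‖ / (1 - ‖z‖)))

/-!
Write `x = σ s` with `σ` the logistic function, `s ∈ (0, 1)`. In the odds coordinate
`ρ / (1 - ρ)` the radial part of `fMap` is multiplication by `e²`, so `‖fMapⁿ x‖ = σ (2n + s)`,
and at radius `σ (2n + s)` the rotation adds `s / 2 ^ ⌊log₂ (n + 1)⌋` turns. These add up to
exactly `k • s` turns after `2 ^ k - 1` steps. At those times both orbits are close to the unit
circle, at angles `k • s` and `k • t`, so their distance is close to `|exp (2πi k (s - t)) - 1|`.
Since `s - t` is irrational, its multiples accumulate at every point of `ℝ / ℤ`, in particular at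
`0` and `1 / 2`, which makes `0` and `2` cluster values of `‖fMapⁿ x - fMapⁿ y‖`.
-/

open Filter Real Topology AddCircle

namespace Real

lemma sigmoid_eq_exp_div (s : ℝ) : sigmoid s = exp s / (1 + exp s) := by
  rw [sigmoid_def, exp_neg]
  field_simp
  ring

lemma sigmoid_one : sigmoid 1 = exp 1 / (1 + exp 1) := sigmoid_eq_exp_div 1

lemma sigmoid_div_one_sub_sigmoid (s : ℝ) : sigmoid s / (1 - sigmoid s) = exp s := by
  rw [← sigmoid_neg, sigmoid_eq_exp_div, sigmoid_eq_exp_div, exp_neg]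
  field_simp
  ring

lemma sigmoid_add (a s : ℝ) :
    sigmoid (s + a) = exp a * sigmoid s / (exp a * sigmoid s - sigmoid s + 1) := by
  have := exp_pos s
  have := exp_pos a
  have hden : exp a * (exp s / (1 + exp s)) - exp s / (1 + exp s) + 1
      = (exp a * exp s + 1) / (1 + exp s) := by
    field_simp
    ring
  rw [sigmoid_eq_exp_div, sigmoid_eq_exp_div, exp_add, hden]
  field_simp
  ring

lemma exists_mem_Ioo_sigmoid_eq {a b x : ℝ} (hx : x ∈ Set.Ioo (sigmoid a) (sigmoid b)) :
    ∃ s ∈ Set.Ioo a b, sigmoid s = x := by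
  obtain ⟨s, rfl⟩ : x ∈ Set.range sigmoid := by
    rw [range_sigmoid]
    exact ⟨(sigmoid_pos a).trans hx.1, hx.2.trans (sigmoid_lt_one b)⟩
  exact ⟨s, ⟨sigmoid_lt_iff.mp hx.1, sigmoid_lt_iff.mp hx.2⟩, rfl⟩

lemma tendsto_sigmoid_two_mul_add (t : ℝ) :
    Tendsto (fun n : ℕ ↦ sigmoid (2 * n + t)) atTop (𝓝 1) :=
  tendsto_sigmoid_atTop.comp <| tendsto_atTop_add_const_right _ t <|
    tendsto_natCast_atTop_atTop.const_mul_atTop two_pos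

end Real

lemma Nat.log_two_add_of_lt {k j : ℕ} (hj : j < 2 ^ k) : Nat.log 2 (2 ^ k + j) = k :=
  Nat.log_eq_of_pow_le_of_lt_pow (by omega) (by rw [pow_succ]; omega)

lemma abs_norm_smul_sub_smul_sub_norm_sub_le {E : Type*} [SeminormedAddCommGroup E]
    [NormedSpace ℝ E] {u v : E} (hu : ‖u‖ = 1) (hv : ‖v‖ = 1) (a b : ℝ) :
    |‖a • u - b • v‖ - ‖u - v‖| ≤ |1 - a| + |1 - b| := calc
  _ ≤ ‖(a • u - b • v) - (u - v)‖ := abs_norm_sub_norm_le _ _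
  _ = ‖(a - 1) • u - (b - 1) • v‖ := by simp only [sub_smul, one_smul]; abel_nf
  _ ≤ ‖(a - 1) • u‖ + ‖(b - 1) • v‖ := norm_sub_le _ _
  _ = |1 - a| + |1 - b| := by
    rw [norm_smul, norm_smul, hu, hv, mul_one, mul_one, Real.norm_eq_abs, Real.norm_eq_abs,
      abs_sub_comm a, abs_sub_comm b]

theorem MapClusterPt.of_tendsto_sub {α X : Type*} [TopologicalSpace X] [AddGroup X]
    [IsTopologicalAddGroup X] {F : Filter α} {u v : α → X} {x : X} (hv : MapClusterPt x F v)
    (huv : Tendsto (u - v) F (𝓝 0)) : MapClusterPt x F u := by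
  rw [mapClusterPt_iff_frequently] at hv ⊢
  intro s hs
  have hadd : ∀ᶠ q in 𝓝 (0, x), q.1 + q.2 ∈ s :=
    (continuous_add.tendsto' (0, x) x (zero_add x)).eventually_mem hs
  obtain ⟨r, hr, t, ht, hrt⟩ := mem_nhds_prod_iff.mp hadd
  refine ((hv t ht).and_eventually (huv hr)).mono fun i ⟨hi, hi'⟩ ↦ ?_
  simpa using hrt (Set.mk_mem_prod hi' hi)

namespace AddCircle

lemma coe_toCircle_coe (θ : ℝ) :
    (toCircle (θ : AddCircle (1 : ℝ)) : ℂ) = Complex.exp (2 * π * Complex.I * θ) := by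
  rw [toCircle_apply_mk, Circle.coe_exp]
  push_cast
  ring_nf

lemma norm_toCircle_sub_toCircle {T : ℝ} (a b : AddCircle T) :
    ‖(toCircle a : ℂ) - toCircle b‖ = ‖(toCircle (a - b) : ℂ) - 1‖ := by
  rw [sub_eq_add_neg a b, toCircle_add, toCircle_neg, Circle.coe_mul, Circle.coe_inv,
    ← mul_one ‖(toCircle a : ℂ) * (toCircle b : ℂ)⁻¹ - 1‖, ← Circle.norm_coe (toCircle b),
    ← norm_mul, sub_mul, inv_mul_cancel_right₀ (Circle.coe_ne_zero _), one_mul]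

theorem mapClusterPt_nsmul_of_irrational {p a : ℝ} [Fact (0 < p)]
    (ha : Irrational (a / p)) (c : AddCircle p) :
    MapClusterPt c atTop (fun n : ℕ ↦ n • (a : AddCircle p)) := by
  refine ((mapClusterPt_atTop_nsmul_tfae c (a : AddCircle p)).out 0 3).mpr ?_
  rw [(denseRange_zsmul_coe_iff.mpr ha).closure_range]
  trivial

end AddCircle

lemma xi_exp_two_mul_add {t : ℝ} (ht : t ∈ Set.Ioo 0 1) (n : ℕ) :
    xi (exp (2 * n + t)) = t / 2 ^ Nat.log 2 (n + 1) := by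
  obtain ⟨ht₀, ht₁⟩ := ht
  have hpos : ¬ exp (2 * n + t) ≤ 1 := by
    rw [not_le, one_lt_exp_iff]
    positivity
  have hfloor : ⌊(2 * n + t : ℝ)⌋ = 2 * n := by
    rw [Int.floor_eq_iff]; push_cast; constructor <;> linarith
  have hhalf : ⌊(2 * n + t : ℝ) / 2⌋ = n := by
    rw [Int.floor_eq_iff]; push_cast; constructor <;> linarith
  have hlog : ⌊logb 2 (((n : ℤ) + 1 : ℤ) : ℝ)⌋ = Nat.log 2 (n + 1) := by
    rw [show (((n : ℤ) + 1 : ℤ) : ℝ) = ((n + 1 : ℕ) : ℝ) by push_cast; ring,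
      show (2 : ℝ) = ((2 : ℕ) : ℝ) by norm_num, floor_logb_natCast (by positivity),
      Int.log_natCast]
  rw [xi, if_neg hpos, log_exp, hfloor, hhalf, if_pos (even_two_mul (n : ℤ)), hlog, zpow_natCast]
  push_cast
  ring

noncomputable def angleSum (n : ℕ) : ℝ :=
  ∑ k ∈ Finset.range n, (2 ^ Nat.log 2 (k + 1) : ℝ)⁻¹

lemma angleSum_succ (n : ℕ) :
    angleSum (n + 1) = angleSum n + (2 ^ Nat.log 2 (n + 1) : ℝ)⁻¹ :=
  Finset.sum_range_succ _ n

lemma angleSum_two_pow_sub_one (k : ℕ) : angleSum (2 ^ k - 1) = k := by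
  induction k with
  | zero => simp [angleSum]
  | succ k ih =>
    have := Nat.one_le_two_pow (n := k)
    have hsplit : 2 ^ (k + 1) - 1 = (2 ^ k - 1) + 2 ^ k := by rw [pow_succ]; omega
    have hblock : ∀ j ∈ Finset.range (2 ^ k),
        (2 ^ Nat.log 2 (2 ^ k - 1 + j + 1) : ℝ)⁻¹ = (2 ^ k : ℝ)⁻¹ := fun j hj ↦ by
      rw [show 2 ^ k - 1 + j + 1 = 2 ^ k + j by omega,
        Nat.log_two_add_of_lt (Finset.mem_range.mp hj)]
    rw [angleSum, hsplit, Finset.sum_range_add, ← angleSum, ih, Finset.sum_congr rfl hblock]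
    simp

lemma fMap_sigmoid_mul_toCircle (s : ℝ) (θ : AddCircle (1 : ℝ)) :
    fMap (sigmoid s * toCircle θ) =
      sigmoid (s + 2) * toCircle (θ + ((xi (exp s) : ℝ) : AddCircle (1 : ℝ))) := by
  have hnorm : ‖(sigmoid s : ℂ) * toCircle θ‖ = sigmoid s := by
    rw [norm_mul, Circle.norm_coe, mul_one, Complex.norm_real,
      Real.norm_of_nonneg (sigmoid_nonneg s)]
  have hden : (exp 2 * sigmoid s - sigmoid s + 1 : ℂ) ≠ 0 := by
    exact_mod_cast (by nlinarith [sigmoid_pos s, one_lt_exp_iff.mpr two_pos] :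
      (exp 2 * sigmoid s - sigmoid s + 1 : ℝ) ≠ 0)
  have hinterior : ¬ (sigmoid s = 0 ∨ sigmoid s = 1) :=
    not_or.mpr ⟨(sigmoid_pos s).ne', (sigmoid_lt_one s).ne⟩
  rw [fMap, hnorm, if_neg hinterior, sigmoid_div_one_sub_sigmoid, sigmoid_add, toCircle_add,
    Circle.coe_mul, coe_toCircle_coe]
  push_cast
  field_simp

lemma fMap_iterate_sigmoid {t : ℝ} (ht : t ∈ Set.Ioo 0 1) (n : ℕ) :
    fMap^[n] (sigmoid t) =
      sigmoid (2 * n + t) * toCircle ((angleSum n * t : ℝ) : AddCircle (1 : ℝ)) := by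
  induction n with
  | zero => simp [angleSum]
  | succ n ih =>
    rw [Function.iterate_succ_apply', ih, fMap_sigmoid_mul_toCircle, xi_exp_two_mul_add ht,
      ← AddCircle.coe_add, angleSum_succ]
    push_cast
    ring_nf

lemma norm_fMap_iterate_sigmoid_le_one {t : ℝ} (ht : t ∈ Set.Ioo 0 1) (n : ℕ) :
    ‖fMap^[n] (sigmoid t)‖ ≤ 1 := by
  rw [fMap_iterate_sigmoid ht, norm_mul, Circle.norm_coe, mul_one, Complex.norm_real,
    Real.norm_of_nonneg (sigmoid_nonneg _)]
  exact sigmoid_le_one _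

lemma abs_norm_fMap_iterate_two_pow_sub_one_sub_le {s t : ℝ} (hs : s ∈ Set.Ioo 0 1)
    (ht : t ∈ Set.Ioo 0 1) (k : ℕ) :
    |‖fMap^[2 ^ k - 1] (sigmoid s) - fMap^[2 ^ k - 1] (sigmoid t)‖
        - ‖(toCircle (k • ((s - t : ℝ) : AddCircle (1 : ℝ))) : ℂ) - 1‖|
      ≤ |1 - sigmoid (2 * (2 ^ k - 1 : ℕ) + s)|
        + |1 - sigmoid (2 * (2 ^ k - 1 : ℕ) + t)| := by
  rw [fMap_iterate_sigmoid hs, fMap_iterate_sigmoid ht, angleSum_two_pow_sub_one,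
    AddCircle.coe_sub, smul_sub, ← norm_toCircle_sub_toCircle, ← Complex.real_smul,
    ← Complex.real_smul]
  simpa [← nsmul_eq_mul, AddCircle.coe_nsmul] using
    abs_norm_smul_sub_smul_sub_norm_sub_le (Circle.norm_coe _) (Circle.norm_coe _) _ _

lemma mapClusterPt_norm_fMap_iterate_sub {s t : ℝ} (hs : s ∈ Set.Ioo 0 1)
    (ht : t ∈ Set.Ioo 0 1) (hst : Irrational (s - t)) (c : AddCircle (1 : ℝ)) :
    MapClusterPt ‖(toCircle c : ℂ) - 1‖ atTop
      (fun n ↦ ‖fMap^[n] (sigmoid s) - fMap^[n] (sigmoid t)‖) := by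
  have hN : Tendsto (fun k : ℕ ↦ 2 ^ k - 1) atTop atTop :=
    tendsto_atTop_mono (fun k ↦ Nat.le_sub_one_of_lt k.lt_two_pow_self) tendsto_id
  have hg : Continuous fun z : AddCircle (1 : ℝ) ↦ ‖(toCircle z : ℂ) - 1‖ := by fun_prop
  have hrot := (mapClusterPt_nsmul_of_irrational (p := 1) (by simpa using hst) c)
    |>.continuousAt_comp hg.continuousAt
  have herr : Tendsto (fun k : ℕ ↦ |1 - sigmoid (2 * (2 ^ k - 1 : ℕ) + s)|
      + |1 - sigmoid (2 * (2 ^ k - 1 : ℕ) + t)|) atTop (𝓝 0) := by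
    simpa using (((tendsto_sigmoid_two_mul_add s).comp hN).const_sub 1).abs.add
      (((tendsto_sigmoid_two_mul_add t).comp hN).const_sub 1).abs
  exact (hrot.of_tendsto_sub (squeeze_zero_norm
    (abs_norm_fMap_iterate_two_pow_sub_one_sub_le hs ht) herr)).of_comp hN

theorem fMap_liYorke_pair_general (x y : ℝ)
    (hx : x ∈ Set.Ioo (1 / 2 : ℝ) (Real.exp 1 / (1 + Real.exp 1)))
    (hy : y ∈ Set.Ioo (1 / 2 : ℝ) (Real.exp 1 / (1 + Real.exp 1)))
    (hirr : Irrational (Real.log (x / (1 - x)) - Real.log (y / (1 - y)))) :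
    Filter.liminf (fun n : ℕ => ‖fMap^[n] (x : ℂ) - fMap^[n] (y : ℂ)‖)
        Filter.atTop = 0 ∧
    2 ≤ Filter.limsup (fun n : ℕ => ‖fMap^[n] (x : ℂ) - fMap^[n] (y : ℂ)‖)
        Filter.atTop := by
  rw [one_div, ← sigmoid_zero, ← sigmoid_one] at hx hy
  obtain ⟨s, hs, rfl⟩ := exists_mem_Ioo_sigmoid_eq hx
  obtain ⟨t, ht, rfl⟩ := exists_mem_Ioo_sigmoid_eq hy
  simp only [sigmoid_div_one_sub_sigmoid, log_exp] at hirr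
  have hclust := mapClusterPt_norm_fMap_iterate_sub hs ht hirr
  have hle_two (n : ℕ) : ‖fMap^[n] (sigmoid s : ℂ) - fMap^[n] (sigmoid t : ℂ)‖ ≤ 2 :=
    (norm_sub_le _ _).trans (by linarith [norm_fMap_iterate_sigmoid_le_one hs n,
      norm_fMap_iterate_sigmoid_le_one ht n])
  have hbdd := isBoundedUnder_of (f := atTop) ⟨2, hle_two⟩
  refine ⟨le_antisymm ?_ (le_liminf_of_le hbdd.isCoboundedUnder_ge
    (.of_forall fun n ↦ norm_nonneg _)), ?_⟩
  · simpa using (hclust 0).liminf_le (isBoundedUnder_of ⟨0, fun n ↦ norm_nonneg _⟩)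
  · have hhalf : (toCircle ((1 / 2 : ℝ) : AddCircle (1 : ℝ)) : ℂ) = -1 := by
      rw [coe_toCircle_coe, ← Complex.exp_pi_mul_I]
      push_cast
      ring_nf
    have := (hclust ((1 / 2 : ℝ) : AddCircle (1 : ℝ))).le_limsup hbdd
    rwa [hhalf, show ‖(-1 : ℂ) - 1‖ = 2 by norm_num] at this

theorem fMap_liYorke_pair (x y : ℝ)
    (hx : x ∈ Set.Ioo (1 / 2 : ℝ) (Real.exp 1 / (1 + Real.exp 1)))
    (hy : y ∈ Set.Ioo (1 / 2 : ℝ) (Real.exp 1 / (1 + Real.exp 1)))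
    (hxy : x ≠ y)
    (hirr : Irrational (Real.log (x / (1 - x)) - Real.log (y / (1 - y)))) :
    Filter.liminf (fun n : ℕ => ‖fMap^[n] (x : ℂ) - fMap^[n] (y : ℂ)‖)
        Filter.atTop = 0 ∧
    2 ≤ Filter.limsup (fun n : ℕ => ‖fMap^[n] (x : ℂ) - fMap^[n] (y : ℂ)‖)
        Filter.atTop :=
  fMap_liYorke_pair_general x y hx hy hirr
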